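/- Let ω_j = exp(iπ(2j-1)/4), j = 1,2,3,4. If t₀ ∈ ℝ satisfies Σ_{r=1}^{4} ω_r^n·exp(ω_r·t₀) = 0 for n = 1, 2, 3, then t₀ = 0. -/

import Mathlib

noncomputable def omega (j : ℤ) : ℂ :=
  Complex.exp (Complex.I * Real.pi * (2 * j - 1) / 4)

/-!
Since `ω_{j+1} = i ω_j`, the four roots are `ω, iω, -ω, -iω` with `ω = ω₁`. Writing
`S_n` for the `n`-th sum, the terms of `S₃ + ω² S₁` coming from `± iω` cancel, leaving
`2ω³ (e^{ωt₀} - e^{-ωt₀})`. Hence `e^{ωt₀} = e^{-ωt₀}`; taking moduli gives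
`Re ω · t₀ = -Re ω · t₀`, and `Re ω = cos (π/4) > 0` forces `t₀ = 0`.
-/

open Complex Finset

theorem omega_succ (j : ℤ) : omega (j + 1) = I * omega j := by
  have hI : exp (I * Real.pi / 2) = I := by
    rw [show I * (Real.pi : ℂ) / 2 = ((Real.pi / 2 : ℝ) : ℂ) * I by push_cast; ring,
      exp_mul_I, ← ofReal_cos, ← ofReal_sin, Real.cos_pi_div_two, Real.sin_pi_div_two]
    simp
  rw [omega, omega, show I * (Real.pi : ℂ) * (2 * ((j + 1 : ℤ) : ℂ) - 1) / 4 =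
    I * Real.pi / 2 + I * Real.pi * (2 * (j : ℂ) - 1) / 4 by push_cast; ring, exp_add, hI]

theorem omega_natCast_add_one (r : ℕ) : omega ((r : ℤ) + 1) = I ^ r * omega 1 := by
  induction r with
  | zero => simp
  | succ r ih => rw [Nat.cast_succ, omega_succ, ih, pow_succ']; ring

theorem omega_one_re_pos : 0 < (omega 1).re := by
  rw [omega, show I * (Real.pi : ℂ) * (2 * ((1 : ℤ) : ℂ) - 1) / 4 = ((Real.pi / 4 : ℝ) : ℂ) * I by
    push_cast; ring, exp_ofReal_mul_I_re, Real.cos_pi_div_four]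
  positivity

theorem sum_rotations_pow_three_add_sq_mul_sum_rotations (z w : ℂ) :
    (∑ r ∈ range 4, (I ^ r * z) ^ 3 * exp (I ^ r * z * w)) +
        z ^ 2 * ∑ r ∈ range 4, (I ^ r * z) ^ 1 * exp (I ^ r * z * w) =
      2 * z ^ 3 * (exp (z * w) - exp (-z * w)) := by
  have hI3 : I ^ 3 = -I := by rw [pow_succ, I_sq]; ring
  simp only [sum_range_succ, sum_range_zero, I_sq, hI3, pow_zero, pow_one, one_mul, neg_mul]
  ring_nf
  rw [hI3]
  ring

theorem eq_zero_of_exp_mul_eq_exp_neg_mul {z : ℂ} (hz : z.re ≠ 0) {t : ℝ}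
    (h : exp (z * t) = exp (-z * t)) : t = 0 := by
  have hre := congrArg (fun u : ℂ => ‖u‖) h
  simp only [norm_exp, Real.exp_eq_exp, mul_re, neg_re, ofReal_re, ofReal_im, mul_zero,
    sub_zero] at hre
  have : z.re * t = 0 := by linarith
  exact (mul_eq_zero.mp this).resolve_left hz

theorem exp_sums_vanish_imp_zero (t0 : ℝ)
    (h : ∀ n : ℕ, 1 ≤ n → n ≤ 3 →
      ∑ r ∈ Finset.range 4, omega ((r : ℤ) + 1) ^ n *
        Complex.exp (omega ((r : ℤ) + 1) * (t0 : ℂ)) = 0) :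
    t0 = 0 := by
  simp only [omega_natCast_add_one] at h
  have key := sum_rotations_pow_three_add_sq_mul_sum_rotations (omega 1) t0
  rw [h 1 le_rfl (by norm_num), h 3 (by norm_num) le_rfl, mul_zero, add_zero, eq_comm] at key
  have hsinh : exp (omega 1 * t0) = exp (-omega 1 * t0) := by
    have hz : omega 1 ≠ 0 := exp_ne_zero _
    simpa [hz, sub_eq_zero] using key
  exact eq_zero_of_exp_mul_eq_exp_neg_mul omega_one_re_pos.ne' hsinh
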